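/- arXiv:quant-ph/0611013 — 2 statements merged into one kernel-verified Lean document; each statement's English description precedes it below -/
import Mathlib

section
/- The function φ(s) = log Tr[ρ^{1−s}σ^s] is convex in s on [0,1] for any two positive definite density matrices ρ and σ. -/
open Matrix
open scoped ComplexOrder
set_option linter.unusedSectionVars false

variable {d : Type*} [Fintype d] [DecidableEq d]

/-- Real part of the trace of a complex matrix. -/
noncomputable def RTr (M : Matrix d d ℂ) : ℝ := (Matrix.trace M).re

/-- Functional calculus outputs are Hermitian for real functions. -/
lemma cfc_isHermitian {A : Matrix d d ℂ} (hA : A.IsHermitian) (f : ℝ → ℝ) :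
    (hA.cfc f).IsHermitian := by
  have hd : (Matrix.diagonal (RCLike.ofReal ∘ f ∘ hA.eigenvalues) :
      Matrix d d ℂ).IsHermitian := by
    refine Matrix.isHermitian_diagonal_of_self_adjoint _ ?_
    ext i
    simp [Function.comp, RCLike.star_def, Complex.conj_ofReal]
  simpa [Matrix.IsHermitian.cfc, mul_assoc, Matrix.star_eq_conjTranspose] using
    Matrix.isHermitian_mul_mul_conjTranspose
      (hA.eigenvectorUnitary : Matrix d d ℂ) hd

/-- Matrix power via functional calculus, with the convention `0 ^ t = 0`. -/
noncomputable def mpow {A : Matrix d d ℂ} (hA : A.IsHermitian) (t : ℝ) : Matrix d d ℂ :=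
  hA.cfc fun x => if x = 0 then 0 else x ^ t

lemma mpow_isHermitian {A : Matrix d d ℂ} (hA : A.IsHermitian) (t : ℝ) :
    (mpow hA t).IsHermitian := cfc_isHermitian hA _

/-- Spectral projection `{C ≥ 0}` onto the nonnegative eigenspaces of a Hermitian matrix. -/
noncomputable def projNonneg {C : Matrix d d ℂ} (hC : C.IsHermitian) : Matrix d d ℂ :=
  hC.cfc fun x => if 0 ≤ x then 1 else 0

/-- Spectral projection `{C < 0}` onto the negative eigenspaces of a Hermitian matrix. -/
noncomputable def projNeg {C : Matrix d d ℂ} (hC : C.IsHermitian) : Matrix d d ℂ :=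
  hC.cfc fun x => if x < 0 then 1 else 0

/-- `n`-fold tensor (Kronecker) power of a matrix. -/
noncomputable def tpow (ρ : Matrix d d ℂ) (n : ℕ) : Matrix (Fin n → d) (Fin n → d) ℂ :=
  Matrix.of fun v w => ∏ i, ρ (v i) (w i)

lemma tpow_isHermitian {ρ : Matrix d d ℂ} (h : ρ.IsHermitian) (n : ℕ) :
    (tpow ρ n).IsHermitian := by
  refine Matrix.IsHermitian.ext fun v w => ?_
  simp only [tpow, Matrix.of_apply, star_prod]
  exact Finset.prod_congr rfl fun i _ => h.apply (v i) (w i)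

lemma smul_isHermitian {A : Matrix d d ℂ} (h : A.IsHermitian) (c : ℝ) :
    ((c : ℂ) • A).IsHermitian := by
  refine Matrix.IsHermitian.ext fun i j => ?_
  simp [Complex.conj_ofReal, h.apply i j, mul_comm]

/-- `phi s = log Tr[rho^(1-s) sigma^s]`. -/
noncomputable def phi {ρ σ : Matrix d d ℂ} (hρ : ρ.IsHermitian) (hσ : σ.IsHermitian) (s : ℝ) : ℝ :=
  Real.log (RTr (mpow hρ (1 - s) * mpow hσ s))

/-!
Diagonalising `ρ = ∑ aᵢ |uᵢ⟩⟨uᵢ|` and `σ = ∑ bⱼ |vⱼ⟩⟨vⱼ|` gives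
`Tr[ρ^(1-s) σ^s] = ∑ᵢⱼ |⟨uᵢ, vⱼ⟩|² aᵢ exp (s (log bⱼ - log aᵢ))`, a nonnegative combination of
exponentials of `s`. Hölder's inequality makes every such function log-convex.
-/

open Real Finset

theorem Real.sum_rpow_mul_rpow_le {ι : Type*} (s : Finset ι) {u v : ι → ℝ}
    (hu : ∀ i ∈ s, 0 ≤ u i) (hv : ∀ i ∈ s, 0 ≤ v i) {a b : ℝ} (ha : 0 ≤ a) (hb : 0 ≤ b)
    (hab : a + b = 1) :
    ∑ i ∈ s, u i ^ a * v i ^ b ≤ (∑ i ∈ s, u i) ^ a * (∑ i ∈ s, v i) ^ b := by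
  rcases ha.eq_or_lt with rfl | ha
  · obtain rfl : b = 1 := by linarith
    simp
  rcases hb.eq_or_lt with rfl | hb
  · obtain rfl : a = 1 := by linarith
    simp
  have holder := inner_le_Lp_mul_Lq_of_nonneg s (HolderConjugate.inv_inv ha hb hab)
    (fun i hi => rpow_nonneg (hu i hi) a) (fun i hi => rpow_nonneg (hv i hi) b)
  rwa [one_div, one_div, inv_inv, inv_inv,
    sum_congr rfl fun i hi => rpow_rpow_inv (hu i hi) ha.ne',
    sum_congr rfl fun i hi => rpow_rpow_inv (hv i hi) hb.ne'] at holder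

theorem convexOn_log_sum_mul_exp {ι : Type*} [Fintype ι] {p : ι → ℝ} (hp : ∀ i, 0 ≤ p i)
    (t : ι → ℝ) :
    ConvexOn ℝ Set.univ (fun s => log (∑ i, p i * exp (s * t i))) := by
  by_cases hp0 : p = 0
  · simpa [hp0] using convexOn_const (0 : ℝ) convex_univ
  obtain ⟨i₀, hi₀⟩ := Function.ne_iff.mp hp0
  have hpos : ∀ s, 0 < ∑ i, p i * exp (s * t i) := fun s =>
    sum_pos' (fun i _ => mul_nonneg (hp i) (exp_pos _).le)
      ⟨i₀, mem_univ _, mul_pos ((hp i₀).lt_of_ne' hi₀) (exp_pos _)⟩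
  refine ⟨convex_univ, fun x _ y _ a b ha hb hab => ?_⟩
  have holder : ∑ i, p i * exp ((a * x + b * y) * t i) ≤
      (∑ i, p i * exp (x * t i)) ^ a * (∑ i, p i * exp (y * t i)) ^ b := by
    refine le_of_eq_of_le (sum_congr rfl fun i _ => ?_)
      (Real.sum_rpow_mul_rpow_le _ (fun i _ => mul_nonneg (hp i) (exp_pos _).le)
      (fun i _ => mul_nonneg (hp i) (exp_pos _).le) ha hb hab)
    rw [mul_rpow (hp i) (exp_pos _).le, mul_rpow (hp i) (exp_pos _).le,
      ← exp_mul, ← exp_mul, mul_mul_mul_comm, ← rpow_add' (hp i) (by simp [hab]),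
      hab, rpow_one, ← exp_add]
    ring_nf
  simp only [smul_eq_mul]
  calc _ ≤ log ((∑ i, p i * exp (x * t i)) ^ a * (∑ i, p i * exp (y * t i)) ^ b) :=
        log_le_log (hpos _) holder
    _ = _ := by
        rw [log_mul (rpow_pos_of_pos (hpos x) _).ne' (rpow_pos_of_pos (hpos y) _).ne',
          log_rpow (hpos x), log_rpow (hpos y)]

lemma RTr_cfc_mul_cfc {A B : Matrix d d ℂ} (hA : A.IsHermitian) (hB : B.IsHermitian)
    (f g : ℝ → ℝ) :
    RTr (hA.cfc f * hB.cfc g) = ∑ i, ∑ j,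
      Complex.normSq ((star (hA.eigenvectorUnitary : Matrix d d ℂ) * hB.eigenvectorUnitary) i j) *
        (f (hA.eigenvalues i) * g (hB.eigenvalues j)) := by
  set U : Matrix d d ℂ := (hA.eigenvectorUnitary : Matrix d d ℂ)
  set V : Matrix d d ℂ := (hB.eigenvectorUnitary : Matrix d d ℂ)
  set P := star U * V
  set D₁ : Matrix d d ℂ := diagonal (RCLike.ofReal ∘ f ∘ hA.eigenvalues)
  set D₂ : Matrix d d ℂ := diagonal (RCLike.ofReal ∘ g ∘ hB.eigenvalues)
  have hcyc : (hA.cfc f * hB.cfc g).trace = (D₁ * P * D₂ * star P).trace := by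
    simp only [IsHermitian.cfc, Unitary.conjStarAlgAut_apply]
    rw [show U * D₁ * star U * (V * D₂ * star V) = U * (D₁ * P * D₂ * star V) by
      simp only [P, mul_assoc], trace_mul_comm]
    simp only [P, star_mul, star_star, mul_assoc]
  rw [RTr, hcyc, trace, Complex.re_sum]
  refine sum_congr rfl fun i _ => ?_
  rw [diag_apply, mul_assoc, mul_assoc, diagonal_mul, ← mul_assoc, mul_apply, mul_sum,
    Complex.re_sum]
  refine sum_congr rfl fun j _ => ?_
  rw [mul_diagonal, star_apply]
  simp only [Function.comp_apply, RCLike.ofReal_eq_complex_ofReal]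
  rw [Complex.star_def, mul_right_comm, Complex.mul_conj, ← Complex.ofReal_mul,
    ← Complex.ofReal_mul, Complex.ofReal_re]
  ring

lemma mpow_eq_cfc_rpow {A : Matrix d d ℂ} (hA : A.PosDef) (t : ℝ) :
    mpow hA.1 t = hA.1.cfc (· ^ t) := by
  have h : (fun x : ℝ => if x = 0 then 0 else x ^ t) ∘ hA.1.eigenvalues =
      (· ^ t) ∘ hA.1.eigenvalues :=
    funext fun i => if_neg (hA.eigenvalues_pos i).ne'
  rw [mpow, IsHermitian.cfc, IsHermitian.cfc, h]

lemma Real.rpow_one_sub_mul_rpow {a b : ℝ} (ha : 0 < a) (hb : 0 < b) (s : ℝ) :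
    a ^ (1 - s) * b ^ s = a * exp (s * (log b - log a)) := by
  calc a ^ (1 - s) * b ^ s = exp (log a + s * (log b - log a)) := by
        rw [rpow_def_of_pos ha, rpow_def_of_pos hb, ← exp_add]
        ring_nf
    _ = _ := by rw [exp_add, exp_log ha]

lemma phi_eq_log_sum_mul_exp {ρ σ : Matrix d d ℂ} (hρ : ρ.PosDef) (hσ : σ.PosDef) (s : ℝ) :
    phi hρ.1 hσ.1 s = log (∑ p : d × d,
      Complex.normSq ((star (hρ.1.eigenvectorUnitary : Matrix d d ℂ) *
        hσ.1.eigenvectorUnitary) p.1 p.2) * hρ.1.eigenvalues p.1 *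
      exp (s * (log (hσ.1.eigenvalues p.2) - log (hρ.1.eigenvalues p.1)))) := by
  rw [phi, mpow_eq_cfc_rpow hρ, mpow_eq_cfc_rpow hσ, RTr_cfc_mul_cfc, Fintype.sum_prod_type]
  simp only [mul_assoc, Real.rpow_one_sub_mul_rpow (hρ.eigenvalues_pos _) (hσ.eigenvalues_pos _)]

theorem stmt11_general {ρ σ : Matrix d d ℂ} (hρ : ρ.PosDef) (hσ : σ.PosDef) :
    ConvexOn ℝ (Set.Icc (0 : ℝ) 1) (phi hρ.1 hσ.1) := by
  rw [funext (phi_eq_log_sum_mul_exp hρ hσ)]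
  refine (convexOn_log_sum_mul_exp (fun p => ?_) _).subset (Set.subset_univ _) (convex_Icc 0 1)
  exact mul_nonneg (Complex.normSq_nonneg _) (hρ.eigenvalues_pos _).le

theorem stmt11 {ρ σ : Matrix d d ℂ} (hρ : ρ.PosDef) (hσ : σ.PosDef)
    (hρ1 : ρ.trace = 1) (hσ1 : σ.trace = 1) :
    ConvexOn ℝ (Set.Icc (0 : ℝ) 1) (phi hρ.1 hσ.1) :=
  stmt11_general hρ hσ
end

section
/- For any two positive semidefinite operators X, Y on a finite-dimensional Hilbert space, Tr[{X − Y ≥ 0} Y] + Tr[{X − Y < 0} X] ≤ Tr[X^{1/2} Y^{1/2}]. -/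
open Matrix
open scoped ComplexOrder
set_option linter.unusedSectionVars false

variable {d : Type*} [Fintype d] [DecidableEq d]

/-!
Since `{X - Y ≥ 0} + {X - Y < 0} = 1` and `({X - Y ≥ 0} - {X - Y < 0}) (X - Y) = |X - Y|`,
twice the left-hand side is `Tr (X + Y) - Tr |X - Y|`, so with `A = X^{1/2}`, `B = Y^{1/2}` the
claim is the Powers–Størmer inequality `Tr (A - B)² ≤ Tr |A² - B²|`.

Each estimate in its proof is an instance of `Re Tr (C M) ≤ Re Tr (|C| S)` for Hermitian `C` and
`-S ≤ M ≤ S`, which follows from `|C| S - C M = C⁺ (S - M) + C⁻ (S + M)` and the positivity of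
traces of products of positive matrices. With `D = A - B` and `W = {D ≥ 0} - {D < 0}`:
`Tr D² ≤ Tr (|D| (A + B))` since `-(A + B) ≤ D ≤ A + B`; cyclicity of the trace turns this into
`Tr (W (A² - B²))` because `D (A + B) + (A + B) D = 2 (A² - B²)`; and `Tr (W (A² - B²))` is at most
`Tr |A² - B²|` since `-1 ≤ W ≤ 1`.
-/

open scoped MatrixOrder

lemma RTr_add (M N : Matrix d d ℂ) : RTr (M + N) = RTr M + RTr N := by
  simp [RTr, trace_add]

lemma RTr_sub (M N : Matrix d d ℂ) : RTr (M - N) = RTr M - RTr N := by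
  simp [RTr, trace_sub]

lemma RTr_mul_comm (M N : Matrix d d ℂ) : RTr (M * N) = RTr (N * M) := by
  rw [RTr, trace_mul_comm, RTr]

lemma RTr_mul_nonneg {P Q : Matrix d d ℂ} (hP : P.PosSemidef) (hQ : Q.PosSemidef) :
    0 ≤ RTr (P * Q) := by
  set R := CFC.sqrt P
  have hR : R.IsHermitian := (CFC.sqrt_nonneg P).posSemidef.isHermitian
  have hRQR : (R * Q * R).PosSemidef := by
    simpa [hR.eq] using hQ.conjTranspose_mul_mul_same R
  rw [← CFC.sqrt_mul_sqrt_self P hP.nonneg, RTr, mul_assoc, trace_mul_comm]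
  exact (Complex.nonneg_iff.mp hRQR.trace_nonneg).1

lemma RTr_mul_le_RTr_abs_mul {C S M : Matrix d d ℂ} (hC : C.IsHermitian)
    (h₁ : (S - M).PosSemidef) (h₂ : (S + M).PosSemidef) :
    RTr (C * M) ≤ RTr (CFC.abs C * S) := by
  have hC' : IsSelfAdjoint C := hC
  have key : CFC.abs C * S - C * M = C⁺ * (S - M) + C⁻ * (S + M) :=
    calc CFC.abs C * S - C * M = (C⁺ + C⁻) * S - (C⁺ - C⁻) * M := by
          rw [CFC.posPart_add_negPart C, CFC.posPart_sub_negPart C]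
      _ = C⁺ * (S - M) + C⁻ * (S + M) := by noncomm_ring
  have hpos := RTr_mul_nonneg (CFC.posPart_nonneg C).posSemidef h₁
  have hneg := RTr_mul_nonneg (CFC.negPart_nonneg C).posSemidef h₂
  have := congrArg RTr key
  rw [RTr_sub, RTr_add] at this
  linarith

lemma mpow_eq_rpow {A : Matrix d d ℂ} (hA : A.PosSemidef) {t : ℝ} (ht : t ≠ 0) :
    mpow hA.1 t = A ^ t := by
  rw [mpow, ← hA.1.cfc_eq, CFC.rpow_eq_cfc_real hA.nonneg]
  refine cfc_congr fun x _ => ?_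
  split_ifs with hx
  · rw [hx, Real.zero_rpow ht]
  · rfl

section SpectralProjections

variable {C : Matrix d d ℂ} (hC : C.IsHermitian)
include hC

lemma projNonneg_eq_cfc : projNonneg hC = cfc (fun x : ℝ => if 0 ≤ x then (1 : ℝ) else 0) C :=
  (hC.cfc_eq _).symm

lemma projNeg_eq_cfc : projNeg hC = cfc (fun x : ℝ => if x < 0 then (1 : ℝ) else 0) C :=
  (hC.cfc_eq _).symm

lemma posSemidef_projNonneg : (projNonneg hC).PosSemidef := by
  rw [projNonneg_eq_cfc hC, ← nonneg_iff_posSemidef]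
  exact cfc_nonneg fun x _ => by split_ifs <;> norm_num

lemma posSemidef_projNeg : (projNeg hC).PosSemidef := by
  rw [projNeg_eq_cfc hC, ← nonneg_iff_posSemidef]
  exact cfc_nonneg fun x _ => by split_ifs <;> norm_num

lemma projNonneg_add_projNeg : projNonneg hC + projNeg hC = 1 := by
  rw [projNonneg_eq_cfc hC, projNeg_eq_cfc hC, ← cfc_const_one ℝ C,
    ← cfc_add C _ _ (finite_real_spectrum.continuousOn _) (finite_real_spectrum.continuousOn _)]
  refine cfc_congr fun x _ => ?_
  split_ifs <;> linarith

lemma projNonneg_sub_projNeg :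
    projNonneg hC - projNeg hC = cfc (fun x : ℝ => if 0 ≤ x then 1 else -1) C := by
  rw [projNonneg_eq_cfc hC, projNeg_eq_cfc hC,
    ← cfc_sub _ _ C (finite_real_spectrum.continuousOn _) (finite_real_spectrum.continuousOn _)]
  refine cfc_congr fun x _ => ?_
  split_ifs <;> linarith

lemma projNonneg_sub_projNeg_mul_self : (projNonneg hC - projNeg hC) * C = CFC.abs C := by
  rw [projNonneg_sub_projNeg hC]
  conv_lhs => arg 2; rw [← cfc_id' ℝ C]
  rw [← cfc_mul _ _ C (finite_real_spectrum.continuousOn _), CFC.abs_eq_cfc_norm C hC]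
  refine cfc_congr fun x _ => ?_
  rcases le_or_gt 0 x with hx | hx
  · simp [hx, abs_of_nonneg hx]
  · simp [not_le.mpr hx, abs_of_neg hx]

lemma self_mul_projNonneg_sub_projNeg : C * (projNonneg hC - projNeg hC) = CFC.abs C := by
  rw [← projNonneg_sub_projNeg_mul_self hC, projNonneg_sub_projNeg hC]
  exact ((Commute.refl C).cfc_real _).eq.symm

lemma two_mul_RTr_abs_mul (S : Matrix d d ℂ) :
    2 * RTr (CFC.abs C * S) = RTr ((projNonneg hC - projNeg hC) * (C * S + S * C)) := by
  rw [mul_add, RTr_add, ← mul_assoc, projNonneg_sub_projNeg_mul_self hC, RTr_mul_comm _ (S * C),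
    mul_assoc, RTr_mul_comm S, self_mul_projNonneg_sub_projNeg hC]
  ring

end SpectralProjections

lemma two_mul_RTr_projNonneg_mul_add_RTr_projNeg_mul {X Y : Matrix d d ℂ}
    (h : (X - Y).IsHermitian) :
    2 * (RTr (projNonneg h * Y) + RTr (projNeg h * X)) = RTr (X + Y) - RTr (CFC.abs (X - Y)) := by
  have hsplit : projNonneg h * Y + projNeg h * X + (projNonneg h * Y + projNeg h * X)
      = (projNonneg h + projNeg h) * (X + Y) - (projNonneg h - projNeg h) * (X - Y) := by
    noncomm_ring
  have := congrArg RTr hsplit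
  rw [projNonneg_add_projNeg, one_mul, projNonneg_sub_projNeg_mul_self, RTr_sub, RTr_add,
    RTr_add] at this
  linarith

theorem RTr_add_sub_two_mul_RTr_sqrt_mul_sqrt_le {X Y : Matrix d d ℂ} (hX : X.PosSemidef)
    (hY : Y.PosSemidef) :
    RTr (X + Y) - 2 * RTr (CFC.sqrt X * CFC.sqrt Y) ≤ RTr (CFC.abs (X - Y)) := by
  set A := CFC.sqrt X
  set B := CFC.sqrt Y
  have hAA : A * A = X := CFC.sqrt_mul_sqrt_self X hX.nonneg
  have hBB : B * B = Y := CFC.sqrt_mul_sqrt_self Y hY.nonneg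
  have hA : A.PosSemidef := (CFC.sqrt_nonneg X).posSemidef
  have hB : B.PosSemidef := (CFC.sqrt_nonneg Y).posSemidef
  have hD : (A - B).IsHermitian := hA.1.sub hB.1
  obtain ⟨W, hW⟩ : ∃ W, W = projNonneg hD - projNeg hD := ⟨_, rfl⟩
  have hsum : (A - B) * (A + B) + (A + B) * (A - B) = (X - Y) + (X - Y) := by
    rw [← hAA, ← hBB]; noncomm_ring
  calc RTr (X + Y) - 2 * RTr (A * B) = RTr ((A - B) * (A - B)) := by
        rw [show (A - B) * (A - B) = A * A + B * B - A * B - B * A by noncomm_ring, hAA, hBB,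
          RTr_sub, RTr_sub, RTr_mul_comm B]
        ring
    _ ≤ RTr (CFC.abs (A - B) * (A + B)) := by
        refine RTr_mul_le_RTr_abs_mul hD ?_ ?_
        · rw [show A + B - (A - B) = B + B by abel]; exact hB.add hB
        · rw [show A + B + (A - B) = A + A by abel]; exact hA.add hA
    _ = RTr ((X - Y) * W) := by
        have h := two_mul_RTr_abs_mul hD (A + B)
        rw [← hW, hsum, mul_add W, RTr_add, RTr_mul_comm W] at h
        linarith
    _ ≤ RTr (CFC.abs (X - Y) * 1) := by
        refine RTr_mul_le_RTr_abs_mul (hX.1.sub hY.1) ?_ ?_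
        · rw [hW, ← projNonneg_add_projNeg hD, add_sub_sub_cancel]
          exact (posSemidef_projNeg hD).add (posSemidef_projNeg hD)
        · rw [hW, ← projNonneg_add_projNeg hD, add_add_sub_cancel]
          exact (posSemidef_projNonneg hD).add (posSemidef_projNonneg hD)
    _ = RTr (CFC.abs (X - Y)) := by rw [mul_one]

theorem stmt14 {X Y : Matrix d d ℂ} (hX : X.PosSemidef) (hY : Y.PosSemidef) :
    RTr (projNonneg (hX.1.sub hY.1) * Y) + RTr (projNeg (hX.1.sub hY.1) * X)
      ≤ RTr (mpow hX.1 (1 / 2) * mpow hY.1 (1 / 2)) := by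
  rw [mpow_eq_rpow hX one_half_pos.ne', mpow_eq_rpow hY one_half_pos.ne', ← CFC.sqrt_eq_rpow,
    ← CFC.sqrt_eq_rpow]
  linarith [two_mul_RTr_projNonneg_mul_add_RTr_projNeg_mul (hX.1.sub hY.1),
    RTr_add_sub_two_mul_RTr_sqrt_mul_sqrt_le hX hY]
end
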